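/- Let S be a finite set with |S| = m ≥ 2, let p be a probability distribution on S, let n ≥ 1, and let X₁,…,Xₙ be independent random variables each distributed according to p. Let p̂ₙ(s) := (1/n)·#{i ≤ n : X_i = s} be the empirical distribution. Then for every δ ∈ (0,1), the probability that ∑_{s∈S} |p̂ₙ(s) − p(s)| ≥ √(2·log(2^m/δ)/n) is at most δ. -/

import Mathlib

/-!
Since `p̂ₙ` and `p` both have total mass one, `‖p̂ₙ − p‖₁ = 2 (p̂ₙ(A) − p(A))` for
`A = {s | p s ≤ p̂ₙ s}`. So if the distance is at least `ε`, some subset `A ⊆ S` has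
`p̂ₙ(A) ≥ p(A) + ε/2`. For a fixed `A`, `n p̂ₙ(A)` is a sum of `n` independent indicators of mean
`p(A)`, and Hoeffding's inequality bounds that event by `exp(-n ε² / 2) = δ / 2^m`; a union bound
over the `2^m` subsets gives `δ`.
-/

open MeasureTheory ProbabilityTheory Finset Real

lemma sum_abs_sub_eq_two_mul_sum_filter_le {S : Type*} [Fintype S] {u v : S → ℝ}
    (huv : ∑ s, u s = ∑ s, v s) :
    ∑ s, |u s - v s| = 2 * ∑ s with v s ≤ u s, (u s - v s) := by
  have hzero : ∑ s, (u s - v s) = 0 := by rw [sum_sub_distrib, huv, sub_self]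
  rw [← sum_filter_add_sum_filter_not univ (fun s => v s ≤ u s)] at hzero ⊢
  have hpos : ∑ s with v s ≤ u s, |u s - v s| = ∑ s with v s ≤ u s, (u s - v s) :=
    sum_congr rfl fun s hs => abs_of_nonneg (sub_nonneg.2 (mem_filter.1 hs).2)
  have hneg : ∑ s with ¬v s ≤ u s, |u s - v s| = -∑ s with ¬v s ≤ u s, (u s - v s) := by
    rw [← sum_neg_distrib]
    exact sum_congr rfl fun s hs => abs_of_neg (sub_neg.2 (not_le.1 (mem_filter.1 hs).2))
  linarith

lemma measure_card_mul_add_le_card_filter_mem_le {Ω β ι : Type*} [MeasurableSpace Ω]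
    [MeasurableSpace β] [Fintype ι] {μ : Measure Ω} [IsProbabilityMeasure μ] {X : ι → Ω → β}
    (hX : ∀ i, Measurable (X i)) (hindep : iIndepFun X μ) {B : Set β} [DecidablePred (· ∈ B)]
    (hB : MeasurableSet B) {q : ℝ} (hq : ∀ i, μ.real (X i ⁻¹' B) = q) {a : ℝ} (ha : 0 ≤ a) :
    μ {ω | Fintype.card ι * (q + a) ≤ #{i | X i ω ∈ B}} ≤
      ENNReal.ofReal (exp (-2 * Fintype.card ι * a ^ 2)) := by
  set Y : ι → Ω → ℝ := fun i ω => B.indicator 1 (X i ω) - q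
  have hY : ∀ i ∈ (univ : Finset ι), HasSubgaussianMGF (Y i) ((‖(1 : ℝ) - 0‖₊ / 2) ^ 2) μ := by
    intro i _
    have hmean : μ[fun ω => B.indicator (1 : β → ℝ) (X i ω)] = q := by
      rw [← hq i, ← integral_indicator_one ((hX i) hB)]
      rfl
    have := hasSubgaussianMGF_of_mem_Icc (μ := μ) (a := 0) (b := 1)
      (X := fun ω => B.indicator (1 : β → ℝ) (X i ω))
      (((measurable_const.indicator hB).comp (hX i)).aemeasurable)
      (ae_of_all _ fun ω => ⟨Set.indicator_nonneg (fun _ _ => zero_le_one) _,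
        Set.indicator_le_self' (fun _ _ => zero_le_one) _⟩)
    rwa [hmean] at this
  have hYindep : iIndepFun Y μ :=
    hindep.comp (fun _ x => B.indicator 1 x - q)
      fun _ => (measurable_const.indicator hB).sub_const q
  have hHoeffding := HasSubgaussianMGF.measure_sum_ge_le_of_iIndepFun hYindep hY
    (ε := Fintype.card ι * a) (by positivity)
  have hset : {ω | Fintype.card ι * (q + a) ≤ #{i | X i ω ∈ B}} =
      {ω | Fintype.card ι * a ≤ ∑ i, Y i ω} := by
    ext ω
    simp only [Set.mem_ofPred_eq, Y, sum_sub_distrib, Set.indicator_apply, Pi.one_apply, sum_boole,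
      sum_const, card_univ, nsmul_eq_mul]
    constructor <;> intro h <;> linarith
  rw [hset, ← ofReal_measureReal]
  refine ENNReal.ofReal_le_ofReal (hHoeffding.trans_eq ?_)
  congr 1
  rcases eq_or_ne (Fintype.card ι : ℝ) 0 with h | h
  · simp [h]
  · simp only [sub_zero, nnnorm_one, one_div, inv_pow, sum_const, card_univ, nsmul_eq_mul,
      NNReal.coe_mul, NNReal.coe_natCast, NNReal.coe_inv, NNReal.coe_pow, NNReal.coe_ofNat, neg_mul]
    field_simp

lemma exists_finset_card_mul_add_le_card_filter_mem {ι S : Type*} [Fintype ι] [Fintype S]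
    [DecidableEq S] (x : ι → S) {p : S → ℝ} (hp : ∑ s, p s = 1) (hι : 0 < Fintype.card ι)
    {ε : ℝ} (hε : ε ≤ ∑ s, |(#{i | x i = s} : ℝ) / Fintype.card ι - p s|) :
    ∃ A : Finset S, Fintype.card ι * (∑ s ∈ A, p s + ε / 2) ≤ #{i | x i ∈ A} := by
  set N : ℝ := (Fintype.card ι : ℝ)
  have hN : 0 < N := Nat.cast_pos.2 hι
  have hcount (A : Finset S) : ∑ s ∈ A, (#{i | x i = s} : ℝ) = #{i | x i ∈ A} := by
    exact_mod_cast sum_card_fiberwise_eq_card_filter univ A x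
  have htotal : ∑ s, (#{i | x i = s} : ℝ) / N = ∑ s, p s := by
    rw [← sum_div, hcount, hp]
    simp [N, div_self hN.ne']
  rw [sum_abs_sub_eq_two_mul_sum_filter_le htotal, sum_sub_distrib, ← sum_div, hcount] at hε
  refine ⟨({s | p s ≤ #{i | x i = s} / N} : Finset S), ?_⟩
  rw [← le_div_iff₀' hN]
  linarith

theorem l1_deviation_empirical_distribution_general
    {Ω : Type*} [MeasurableSpace Ω] (Pr : Measure Ω) [IsProbabilityMeasure Pr]
    {S : Type*} [Fintype S] [DecidableEq S]
    [MeasurableSpace S] [MeasurableSingletonClass S]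
    (m : ℕ) (hm : m = Fintype.card S)
    (p : S → ℝ) (hp0 : ∀ s, 0 ≤ p s) (hp1 : ∑ s, p s = 1)
    (n : ℕ) (hn : 1 ≤ n) (X : Fin n → Ω → S)
    (hmeas : ∀ i, Measurable (X i))
    (hindep : iIndepFun X Pr)
    (hdist : ∀ i s, Pr (X i ⁻¹' {s}) = ENNReal.ofReal (p s))
    (δ : ℝ) (hδ : δ ∈ Set.Ioo (0 : ℝ) 1) :
    Pr {ω | Real.sqrt (2 * Real.log (2 ^ m / δ) / n) ≤
        ∑ s : S, |((Finset.univ.filter (fun i => X i ω = s)).card : ℝ) / n - p s|} ≤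
      ENNReal.ofReal δ := by
  obtain ⟨hδ0, hδ1⟩ := hδ
  set ε := √(2 * log (2 ^ m / δ) / n)
  have hexp : exp (-2 * n * (ε / 2) ^ 2) = δ / 2 ^ m := by
    have hlog : 0 ≤ log (2 ^ m / δ) :=
      log_nonneg ((one_le_div₀ hδ0).2 (hδ1.le.trans (one_le_pow₀ one_le_two)))
    have hn' : (n : ℝ) ≠ 0 := by positivity
    rw [div_pow, sq_sqrt (by positivity), show -2 * n * (2 * log (2 ^ m / δ) / n / 2 ^ 2) =
      -log (2 ^ m / δ) by field_simp, exp_neg, exp_log (by positivity), inv_div]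
  have hprob (A : Finset S) (i : Fin n) : Pr.real (X i ⁻¹' A) = ∑ s ∈ A, p s := by
    rw [measureReal_def, ← sum_measure_preimage_singleton _
      fun s _ => hmeas i (measurableSet_singleton s), sum_congr rfl fun s _ => hdist i s,
      ← ENNReal.ofReal_sum_of_nonneg fun s _ => hp0 s,
      ENNReal.toReal_ofReal (sum_nonneg fun s _ => hp0 s)]
  calc Pr {ω | ε ≤ ∑ s, |(#{i | X i ω = s} : ℝ) / n - p s|}
      ≤ Pr (⋃ A : Finset S, {ω | (n : ℝ) * (∑ s ∈ A, p s + ε / 2) ≤ #{i | X i ω ∈ A}}) :=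
        measure_mono fun ω hω => Set.mem_iUnion.2 <| by
          simpa using exists_finset_card_mul_add_le_card_filter_mem (X · ω) hp1
            (by rwa [Fintype.card_fin]) (by simpa using hω)
    _ ≤ ∑ A : Finset S, Pr {ω | (n : ℝ) * (∑ s ∈ A, p s + ε / 2) ≤ #{i | X i ω ∈ A}} :=
        measure_iUnion_fintype_le _ _
    _ ≤ ∑ _A : Finset S, ENNReal.ofReal (δ / 2 ^ m) := by
        gcongr with A
        have := measure_card_mul_add_le_card_filter_mem_le hmeas hindep A.measurableSet
          (hprob A) (a := ε / 2) (by positivity)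
        rwa [Fintype.card_fin, hexp] at this
    _ = ENNReal.ofReal δ := by
        rw [sum_const, card_univ, Fintype.card_finset, ← hm, nsmul_eq_mul,
          ← ENNReal.ofReal_natCast, ← ENNReal.ofReal_mul (by positivity)]
        push_cast
        field_simp

/-- Weissman-type L1 deviation bound for the empirical distribution of `n` i.i.d. samples
from a distribution `p` on a finite set of size `m`:
`‖p̂ₙ − p‖₁ ≥ √(2·log(2^m/δ)/n)` with probability at most `δ`. -/
theorem l1_deviation_empirical_distribution
    {Ω : Type*} [MeasurableSpace Ω] (Pr : Measure Ω) [IsProbabilityMeasure Pr]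
    {S : Type*} [Fintype S] [DecidableEq S]
    [MeasurableSpace S] [MeasurableSingletonClass S]
    (m : ℕ) (hm : m = Fintype.card S) (hm2 : 2 ≤ m)
    (p : S → ℝ) (hp0 : ∀ s, 0 ≤ p s) (hp1 : ∑ s, p s = 1)
    (n : ℕ) (hn : 1 ≤ n) (X : Fin n → Ω → S)
    (hmeas : ∀ i, Measurable (X i))
    (hindep : iIndepFun X Pr)
    (hdist : ∀ i s, Pr (X i ⁻¹' {s}) = ENNReal.ofReal (p s))
    (δ : ℝ) (hδ : δ ∈ Set.Ioo (0 : ℝ) 1) :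
    Pr {ω | Real.sqrt (2 * Real.log (2 ^ m / δ) / n) ≤
        ∑ s : S, |((Finset.univ.filter (fun i => X i ω = s)).card : ℝ) / n - p s|} ≤
      ENNReal.ofReal δ :=
  l1_deviation_empirical_distribution_general Pr m hm p hp0 hp1 n hn X hmeas hindep hdist δ hδ
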